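/- On the Lie algebra A_{6,54}^{2,1} with structure equations (e^{16}+e^{35}, e^{26}+e^{45}, -e^{36}, -e^{46}, 2e^{56}, 0), the pair F = e^{31} + e^{42} + 2e^{65} and ρ = e^{346} + e^{235} - e^{145} - 2e^{126} satisfies dF = 0, dρ = 0, F^3 ≠ 0, and F∧ρ = 0. -/

import Mathlib

/-!
Every identity is a finite computation in `Λ(ℝ⁶)`: expanding the products and sorting each
monomial of basis 1-forms into increasing order with `eᵢ eⱼ = -eⱼ eᵢ` and `eᵢ eᵢ = 0` makes
`dF`, `dρ` and `F ∧ ρ` cancel to `0` and turns `F³` into `12 e¹²³⁴⁵⁶`. The top monomial is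
nonzero because it is a member of the basis of the exterior algebra induced by the standard
basis of `ℝ⁶`.
-/

open ExteriorAlgebra

noncomputable section

/-- The exterior algebra Λ*(g*) of a 6-dimensional real Lie algebra g,
    identified with the exterior algebra on ℝ^6. -/
abbrev E6 : Type := ExteriorAlgebra ℝ (Fin 6 → ℝ)

/-- The basis 1-forms e^1, ..., e^6 (0-indexed). -/
def e (i : Fin 6) : E6 := ι ℝ (Pi.single i 1)

/-- Structure equations: d of the basis 1-forms. -/
def d1 : Fin 6 → E6 :=
  ![e 0 * e 5 + e 2 * e 4,
    e 1 * e 5 + e 3 * e 4,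
    -(e 2 * e 5),
    -(e 3 * e 5),
    (2:ℝ) • (e 4 * e 5),
    0]

/-- Leibniz: d(e^i ∧ e^j) = de^i ∧ e^j - e^i ∧ de^j. -/
def d2 (i j : Fin 6) : E6 := d1 i * e j - e i * d1 j

/-- Leibniz: d(e^i ∧ e^j ∧ e^k) = de^i ∧ e^j ∧ e^k - e^i ∧ de^j ∧ e^k + e^i ∧ e^j ∧ de^k. -/
def d3 (i j k : Fin 6) : E6 := d1 i * e j * e k - e i * d1 j * e k + e i * e j * d1 k

/-- F. -/
def F : E6 := e 2 * e 0 + e 3 * e 1 + (2:ℝ) • (e 5 * e 4)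

/-- dF via the Leibniz rule. -/
def dF : E6 := d2 2 0 + d2 3 1 + (2:ℝ) • (d2 5 4)

/-- ρ. -/
def ρ : E6 := e 2 * e 3 * e 5 + e 1 * e 2 * e 4 - e 0 * e 3 * e 4 + (-2:ℝ) • (e 0 * e 1 * e 5)

/-- dρ via the Leibniz rule. -/
def dρ : E6 := d3 2 3 5 + d3 1 2 4 - d3 0 3 4 + (-2:ℝ) • (d3 0 1 5)

namespace ExteriorAlgebra

variable {R M : Type*} [CommRing R] [AddCommGroup M] [Module R M]

theorem ι_mul_ι_mul_self (m : M) (x : ExteriorAlgebra R M) : ι R m * (ι R m * x) = 0 := by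
  rw [← mul_assoc, ι_sq_zero, zero_mul]

theorem ι_mul_ι_comm (m n : M) : ι R m * ι R n = -(ι R n * ι R m) :=
  eq_neg_of_add_eq_zero_left (ι_add_mul_swap m n)

theorem ι_mul_ι_mul_comm (m n : M) (x : ExteriorAlgebra R M) :
    ι R m * (ι R n * x) = -(ι R n * (ι R m * x)) := by
  rw [← mul_assoc, ι_mul_ι_comm, neg_mul, mul_assoc]

theorem ιMulti_basis_ne_zero [Nontrivial R] {n : ℕ} (b : Module.Basis (Fin n) R M) :
    ιMulti R n b ≠ 0 := by
  have hcard : (Finset.univ : Finset (Fin n)).card = n := Finset.card_fin n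
  have hid : ⇑(Finset.univ.orderEmbOfFin hcard) = id :=
    (Finset.orderEmbOfFin_unique hcard (fun _ => Finset.mem_univ _) strictMono_id).symm
  have := b.ExteriorAlgebra.ne_zero Finset.univ
  rwa [basis_apply_ofCard b hcard, ιMulti_family, Set.powersetCard.ofFinEmbEquiv_symm_apply,
    Set.powersetCard.ofCard, hid, Function.comp_id] at this

end ExteriorAlgebra

theorem e_mul_self (i : Fin 6) : e i * e i = 0 := ι_sq_zero _

theorem e_mul_e_mul_self (i : Fin 6) (x : E6) : e i * (e i * x) = 0 :=
  ι_mul_ι_mul_self _ x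

-- Guarded by `j < i`, these two rewrite every monomial into increasing order of indices.
theorem e_mul_e_of_lt {i j : Fin 6} (_ : j < i) : e i * e j = -(e j * e i) :=
  ι_mul_ι_comm _ _

theorem e_mul_e_mul_of_lt {i j : Fin 6} (_ : j < i) (x : E6) :
    e i * (e j * x) = -(e j * (e i * x)) :=
  ι_mul_ι_mul_comm _ _ x

theorem dF_eq_zero : dF = 0 := by
  simp (disch := decide) [dF, d2, d1, mul_assoc, e_mul_self, e_mul_e_mul_self, e_mul_e_of_lt,
    e_mul_e_mul_of_lt, mul_add]

theorem dρ_eq_zero : dρ = 0 := by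
  simp (disch := decide) only [dρ, d3, d1, Matrix.cons_val, mul_assoc, e_mul_self,
    e_mul_e_of_lt, e_mul_e_mul_of_lt, mul_add, add_mul, neg_mul, mul_neg, mul_zero,
    mul_smul_comm]
  module

theorem F_mul_ρ_eq_zero : F * ρ = 0 := by
  simp (disch := decide) [F, ρ, mul_assoc, e_mul_self, e_mul_e_mul_self, e_mul_e_of_lt,
    e_mul_e_mul_of_lt, mul_add, add_mul, mul_sub]

theorem F_mul_F_mul_F : F * F * F = (12 : ℝ) • ιMulti ℝ 6 (Pi.basisFun ℝ (Fin 6)) := by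
  have hvol : ιMulti ℝ 6 (Pi.basisFun ℝ (Fin 6)) = e 0 * (e 1 * (e 2 * (e 3 * (e 4 * e 5)))) := by
    simp [ιMulti_apply, Matrix.vecTail, e]
  rw [hvol]
  simp (disch := decide) only [F, mul_assoc, e_mul_self, e_mul_e_mul_self, e_mul_e_of_lt,
    e_mul_e_mul_of_lt, mul_add, add_mul, neg_mul, mul_neg, mul_zero, neg_zero, neg_neg, add_zero,
    zero_add, smul_mul_assoc, mul_smul_comm, smul_neg, smul_zero, smul_add]
  module

theorem F_mul_F_mul_F_ne_zero : F * F * F ≠ 0 :=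
  F_mul_F_mul_F ▸ smul_ne_zero (by norm_num) (ιMulti_basis_ne_zero _)

/-- Symplectic half-flat structure on A_{6,54}^{2,1}. -/
theorem stmt11 : dF = 0 ∧ dρ = 0 ∧ F * F * F ≠ 0 ∧ F * ρ = 0 :=
  ⟨dF_eq_zero, dρ_eq_zero, F_mul_F_mul_F_ne_zero, F_mul_ρ_eq_zero⟩
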